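/- arXiv:2401.02065 — 5 statements merged into one kernel-verified Lean document; each statement's English description precedes it below -/
import Mathlib

section
/- Let (A, m_A, i_A) and (B, m_B, i_B) be Q-systems in Hilb and let (H, Q1, Q2) be a quantum bi-element of the pair (A, B). Then the Frobenius identities hold for Q1: (m_A ⊗ 1_H)∘(1_A ⊗ Q1) = Q1∘Q1* = (1_A ⊗ Q1*)∘(m_A* ⊗ 1_H) as linear maps A ⊗ H → A ⊗ H. -/
/-!
Q-systems in the C*-tensor category `Hilb` of finite dimensional complex Hilbert
spaces.  Tensor products of Hilbert spaces carry the natural inner product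
`⟪a ⊗ b, c ⊗ d⟫ = ⟪a, c⟫ * ⟪b, d⟫`; since Mathlib does not provide this inner
product structure on `TensorProduct`, we encode it by a pairing
`p : E ⊗ F → E ⊗ F → ℂ` together with the (uniquely determining) requirements
that it is sesquilinear and takes the natural values on elementary tensors
(`IsTensorPairing`).  Hilbert space adjoints are encoded as data together with
their (uniquely determining) defining property w.r.t. these pairings
(`AdjointWRT`).  Identifications along the canonical associator and unitor
isomorphisms are written explicitly via `TensorProduct.assoc`, `lid`, `rid`.
-/

open scoped TensorProduct
open LinearMap

noncomputable section

/-- The natural inner product pairing on the tensor product of two complex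
inner product spaces: sesquilinear (conjugate-linear in the first variable,
linear in the second) and `⟪a ⊗ b, c ⊗ d⟫ = ⟪a, c⟫ * ⟪b, d⟫` on elementary
tensors.  These conditions determine the pairing uniquely. -/
def IsTensorPairing {E F : Type*} [NormedAddCommGroup E] [InnerProductSpace ℂ E]
    [NormedAddCommGroup F] [InnerProductSpace ℂ F]
    (p : E ⊗[ℂ] F → E ⊗[ℂ] F → ℂ) : Prop :=
  (∀ x x' y, p (x + x') y = p x y + p x' y) ∧
  (∀ x y y', p x (y + y') = p x y + p x y') ∧
  (∀ (c : ℂ) (x y), p (c • x) y = (starRingEnd ℂ) c * p x y) ∧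
  (∀ (c : ℂ) (x y), p x (c • y) = c * p x y) ∧
  (∀ (a : E) (b : F) (c : E) (d : F),
    p (a ⊗ₜ[ℂ] b) (c ⊗ₜ[ℂ] d) = (inner ℂ a c : ℂ) * (inner ℂ b d : ℂ))

/-- The inner product pairing of a complex inner product space. -/
def innerP (E : Type*) [NormedAddCommGroup E] [InnerProductSpace ℂ E] : E → E → ℂ :=
  fun x y => inner ℂ x y

/-- `g` is the (Hilbert space) adjoint of `f` with respect to the pairings
`pX` and `pY`:  `⟪f x, y⟫ = ⟪x, g y⟫` for all `x`, `y`. -/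
def AdjointWRT {X Y : Type*} [AddCommMonoid X] [Module ℂ X] [AddCommMonoid Y] [Module ℂ Y]
    (pX : X → X → ℂ) (pY : Y → Y → ℂ) (f : X →ₗ[ℂ] Y) (g : Y →ₗ[ℂ] X) : Prop :=
  ∀ x y, pY (f x) y = pX x (g y)

/-- The Q-system axioms for multiplication `m : A ⊗ A → A` and unit `i : ℂ → A`,
with `mS` playing the role of the adjoint `m*`:  associativity, unitality, the
Frobenius condition and separability (with canonical associators and unitors
written explicitly). -/
def QSystemEqs (A : Type*) [AddCommGroup A] [Module ℂ A]
    (m : A ⊗[ℂ] A →ₗ[ℂ] A) (i : ℂ →ₗ[ℂ] A) (mS : A →ₗ[ℂ] A ⊗[ℂ] A) : Prop :=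
  -- associativity: m ∘ (m ⊗ 1) = m ∘ (1 ⊗ m)
  m ∘ₗ rTensor A m =
      m ∘ₗ lTensor A m ∘ₗ (TensorProduct.assoc ℂ A A A).toLinearMap ∧
  -- unitality: m ∘ (i ⊗ 1) = 1 = m ∘ (1 ⊗ i)
  m ∘ₗ rTensor A i = (TensorProduct.lid ℂ A).toLinearMap ∧
  m ∘ₗ lTensor A i = (TensorProduct.rid ℂ A).toLinearMap ∧
  -- Frobenius: (m ⊗ 1) ∘ (1 ⊗ m*) = m* ∘ m = (1 ⊗ m) ∘ (m* ⊗ 1)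
  rTensor A m ∘ₗ (TensorProduct.assoc ℂ A A A).symm.toLinearMap ∘ₗ lTensor A mS =
      mS ∘ₗ m ∧
  lTensor A m ∘ₗ (TensorProduct.assoc ℂ A A A).toLinearMap ∘ₗ rTensor A mS =
      mS ∘ₗ m ∧
  -- separability: m ∘ m* = 1
  m ∘ₗ mS = LinearMap.id

/-- The defining conditions of a *quantum bi-element* `(H, Q1, Q2)` of a pair of
Q-systems `(A, mA, iA)`, `(B, mB, iB)` in Hilb, with `mAS, iAS, mBS, iBS, Q1S, Q2S`
playing the roles of the adjoints `mA*, iA*, mB*, iB*, Q1*, Q2*` (canonical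
associators and unitors written explicitly):
(1) `(1_A ⊗ Q1)∘Q1 = (mA* ⊗ 1_H)∘Q1`, `(Q2 ⊗ 1_B)∘Q2 = (1_H ⊗ mB*)∘Q2`,
    `(1_A ⊗ Q2)∘Q1 = (Q1 ⊗ 1_B)∘Q2`;
(2) `(iA* ⊗ 1_H)∘Q1 = 1_H = (1_H ⊗ iB*)∘Q2`;
(3) `Q1* = (iA* ⊗ 1_H)∘(mA ⊗ 1_H)∘(1_A ⊗ Q1)` and
    `Q2* = (1_H ⊗ iB*)∘(1_H ⊗ mB)∘(Q2 ⊗ 1_B)`. -/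
def QBEEqs (A B H : Type*) [AddCommGroup A] [Module ℂ A] [AddCommGroup B] [Module ℂ B]
    [AddCommGroup H] [Module ℂ H]
    (mA : A ⊗[ℂ] A →ₗ[ℂ] A) (iAS : A →ₗ[ℂ] ℂ) (mAS : A →ₗ[ℂ] A ⊗[ℂ] A)
    (mB : B ⊗[ℂ] B →ₗ[ℂ] B) (iBS : B →ₗ[ℂ] ℂ) (mBS : B →ₗ[ℂ] B ⊗[ℂ] B)
    (Q1 : H →ₗ[ℂ] A ⊗[ℂ] H) (Q2 : H →ₗ[ℂ] H ⊗[ℂ] B)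
    (Q1S : A ⊗[ℂ] H →ₗ[ℂ] H) (Q2S : H ⊗[ℂ] B →ₗ[ℂ] H) : Prop :=
  -- (1)
  lTensor A Q1 ∘ₗ Q1 =
      (TensorProduct.assoc ℂ A A H).toLinearMap ∘ₗ rTensor H mAS ∘ₗ Q1 ∧
  rTensor B Q2 ∘ₗ Q2 =
      (TensorProduct.assoc ℂ H B B).symm.toLinearMap ∘ₗ lTensor H mBS ∘ₗ Q2 ∧
  lTensor A Q2 ∘ₗ Q1 =
      (TensorProduct.assoc ℂ A H B).toLinearMap ∘ₗ rTensor B Q1 ∘ₗ Q2 ∧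
  -- (2)
  (TensorProduct.lid ℂ H).toLinearMap ∘ₗ rTensor H iAS ∘ₗ Q1 = LinearMap.id ∧
  (TensorProduct.rid ℂ H).toLinearMap ∘ₗ lTensor H iBS ∘ₗ Q2 = LinearMap.id ∧
  -- (3)
  Q1S = (TensorProduct.lid ℂ H).toLinearMap ∘ₗ rTensor H iAS ∘ₗ rTensor H mA ∘ₗ
      (TensorProduct.assoc ℂ A A H).symm.toLinearMap ∘ₗ lTensor A Q1 ∧
  Q2S = (TensorProduct.rid ℂ H).toLinearMap ∘ₗ lTensor H iBS ∘ₗ lTensor H mB ∘ₗ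
      (TensorProduct.assoc ℂ H B B).toLinearMap ∘ₗ rTensor B Q2

/-!
The counit `ε = iA*` satisfies `(ε ⊗ 1) mA* = 1 = (1 ⊗ ε) mA*`, the adjoints of the unit laws.
Together with the Frobenius condition these give the snake identities
`(ε mA ⊗ 1)(1 ⊗ mA*) = mA = (1 ⊗ ε mA)(mA* ⊗ 1)`. Since `Q1* = (ε mA ⊗ 1)(1 ⊗ Q1)`, the
coassociativity `(1 ⊗ Q1) Q1 = (mA* ⊗ 1) Q1` turns `Q1 Q1*` into
`(ε mA ⊗ 1 ⊗ 1)(1 ⊗ mA* ⊗ 1)(1 ⊗ Q1)`, which is `(mA ⊗ 1)(1 ⊗ Q1)` by the first snake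
identity; the second snake identity alone rewrites `(1 ⊗ Q1*)(mA* ⊗ 1)` as `(mA ⊗ 1)(1 ⊗ Q1)`.
-/

namespace TensorProduct

variable {R A B C M N : Type*} [CommSemiring R]
  [AddCommMonoid A] [Module R A] [AddCommMonoid B] [Module R B] [AddCommMonoid C] [Module R C]
  [AddCommMonoid M] [Module R M] [AddCommMonoid N] [Module R N]

theorem rTensor_assoc_symm_tmul (f : A ⊗[R] B →ₗ[R] C) (a : A) (x : B ⊗[R] M) :
    rTensor M f ((TensorProduct.assoc R A B M).symm (a ⊗ₜ x)) = rTensor M (f ∘ₗ mk R A B a) x := by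
  induction x using TensorProduct.induction_on with
  | zero => simp
  | tmul b m => simp
  | add x y hx hy => simp_all [tmul_add]

theorem lTensor_assoc_tmul (f : B ⊗[R] C →ₗ[R] N) (x : A ⊗[R] B) (c : C) :
    lTensor A f (TensorProduct.assoc R A B C (x ⊗ₜ c)) = lTensor A (f ∘ₗ (mk R B C).flip c) x := by
  induction x using TensorProduct.induction_on with
  | zero => simp
  | tmul a b => simp
  | add x y hx hy => simp_all [add_tmul]

theorem lid_rTensor_lTensor (φ : A →ₗ[R] R) (f : M →ₗ[R] N) (x : A ⊗[R] M) :
    TensorProduct.lid R N (rTensor N φ (lTensor A f x)) =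
      f (TensorProduct.lid R M (rTensor M φ x)) := by
  induction x using TensorProduct.induction_on with
  | zero => simp
  | tmul a m => simp
  | add x y hx hy => simp_all

theorem lid_rTensor_assoc (φ : A →ₗ[R] R) (w : (A ⊗[R] B) ⊗[R] M) :
    TensorProduct.lid R (B ⊗[R] M) (rTensor (B ⊗[R] M) φ (TensorProduct.assoc R A B M w)) =
      rTensor M (TensorProduct.lid R B ∘ₗ rTensor B φ) w := by
  induction w using TensorProduct.induction_on with
  | zero => simp
  | tmul x m =>
    induction x using TensorProduct.induction_on with
    | zero => simp
    | tmul a b => simp [smul_tmul']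
    | add x y hx hy => simp_all [add_tmul]
  | add x y hx hy => simp_all

theorem lTensor_smulRight (ψ : A →ₗ[R] R) (m : M) (x : B ⊗[R] A) :
    lTensor B (ψ.smulRight m) x = TensorProduct.rid R B (lTensor B ψ x) ⊗ₜ m := by
  induction x using TensorProduct.induction_on with
  | zero => simp
  | tmul b a => simp [smul_tmul]
  | add x y hx hy => simp_all [add_tmul]

section Frobenius

variable {μ : A ⊗[R] A →ₗ[R] A} {δ : A →ₗ[R] A ⊗[R] A} {ε : A →ₗ[R] R}

theorem lid_rTensor_mul_tmul_comul
    (hfrob : rTensor A μ ∘ₗ (TensorProduct.assoc R A A A).symm.toLinearMap ∘ₗ lTensor A δ = δ ∘ₗ μ)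
    (hcounit : (TensorProduct.lid R A).toLinearMap ∘ₗ rTensor A ε ∘ₗ δ = LinearMap.id) (a b : A) :
    TensorProduct.lid R A (rTensor A (ε ∘ₗ μ ∘ₗ mk R A A a) (δ b)) = μ (a ⊗ₜ b) := by
  calc _ = TensorProduct.lid R A (rTensor A ε
          (rTensor A μ ((TensorProduct.assoc R A A A).symm (a ⊗ₜ δ b)))) := by
        rw [rTensor_assoc_symm_tmul, ← rTensor_comp_apply]
    _ = TensorProduct.lid R A (rTensor A ε (δ (μ (a ⊗ₜ b)))) := by
        rw [← LinearMap.comp_apply (δ), ← hfrob]; rfl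
    _ = μ (a ⊗ₜ b) := LinearMap.congr_fun hcounit _

theorem rid_lTensor_mul_tmul_comul
    (hfrob : lTensor A μ ∘ₗ (TensorProduct.assoc R A A A).toLinearMap ∘ₗ rTensor A δ = δ ∘ₗ μ)
    (hcounit : (TensorProduct.rid R A).toLinearMap ∘ₗ lTensor A ε ∘ₗ δ = LinearMap.id) (a b : A) :
    TensorProduct.rid R A (lTensor A (ε ∘ₗ μ ∘ₗ (mk R A A).flip b) (δ a)) = μ (a ⊗ₜ b) := by
  calc _ = TensorProduct.rid R A (lTensor A ε
          (lTensor A μ (TensorProduct.assoc R A A A (δ a ⊗ₜ b)))) := by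
        rw [lTensor_assoc_tmul, ← lTensor_comp_apply]
    _ = TensorProduct.rid R A (lTensor A ε (δ (μ (a ⊗ₜ b)))) := by
        rw [← LinearMap.comp_apply (δ), ← hfrob]; rfl
    _ = μ (a ⊗ₜ b) := LinearMap.congr_fun hcounit _

variable {Q : M →ₗ[R] A ⊗[R] M} {QS : A ⊗[R] M →ₗ[R] M}

theorem rTensor_mul_comp_lTensor_eq_comp_of_coassoc
    (hfrob : rTensor A μ ∘ₗ (TensorProduct.assoc R A A A).symm.toLinearMap ∘ₗ lTensor A δ = δ ∘ₗ μ)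
    (hcounit : (TensorProduct.lid R A).toLinearMap ∘ₗ rTensor A ε ∘ₗ δ = LinearMap.id)
    (hQ : lTensor A Q ∘ₗ Q = (TensorProduct.assoc R A A M).toLinearMap ∘ₗ rTensor M δ ∘ₗ Q)
    (hQS : QS = (TensorProduct.lid R M).toLinearMap ∘ₗ rTensor M ε ∘ₗ rTensor M μ ∘ₗ
      (TensorProduct.assoc R A A M).symm.toLinearMap ∘ₗ lTensor A Q) :
    rTensor M μ ∘ₗ (TensorProduct.assoc R A A M).symm.toLinearMap ∘ₗ lTensor A Q = Q ∘ₗ QS := by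
  refine TensorProduct.ext' fun a h => ?_
  set φ := ε ∘ₗ μ ∘ₗ mk R A A a
  have hQS_tmul : QS (a ⊗ₜ h) = TensorProduct.lid R M (rTensor M φ (Q h)) := by
    simp [hQS, rTensor_assoc_symm_tmul, φ, rTensor_comp_apply]
  calc rTensor M μ ((TensorProduct.assoc R A A M).symm (a ⊗ₜ Q h))
      = rTensor M (μ ∘ₗ mk R A A a) (Q h) := rTensor_assoc_symm_tmul μ a (Q h)
    _ = rTensor M (TensorProduct.lid R A ∘ₗ rTensor A φ ∘ₗ δ) (Q h) := by
        congr 2; ext b; exact (lid_rTensor_mul_tmul_comul hfrob hcounit a b).symm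
    _ = TensorProduct.lid R (A ⊗[R] M)
          (rTensor _ φ (TensorProduct.assoc R A A M (rTensor M δ (Q h)))) := by
        rw [lid_rTensor_assoc, ← rTensor_comp_apply, comp_assoc]
    _ = TensorProduct.lid R (A ⊗[R] M) (rTensor _ φ (lTensor A Q (Q h))) := by
        rw [← LinearMap.comp_apply (lTensor A Q), hQ]; rfl
    _ = Q (QS (a ⊗ₜ h)) := by rw [lid_rTensor_lTensor, hQS_tmul]

theorem rTensor_mul_comp_lTensor_eq_lTensor_comp_rTensor_comul
    (hfrob : lTensor A μ ∘ₗ (TensorProduct.assoc R A A A).toLinearMap ∘ₗ rTensor A δ = δ ∘ₗ μ)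
    (hcounit : (TensorProduct.rid R A).toLinearMap ∘ₗ lTensor A ε ∘ₗ δ = LinearMap.id)
    (hQS : QS = (TensorProduct.lid R M).toLinearMap ∘ₗ rTensor M ε ∘ₗ rTensor M μ ∘ₗ
      (TensorProduct.assoc R A A M).symm.toLinearMap ∘ₗ lTensor A Q) :
    rTensor M μ ∘ₗ (TensorProduct.assoc R A A M).symm.toLinearMap ∘ₗ lTensor A Q =
      lTensor A QS ∘ₗ (TensorProduct.assoc R A A M).toLinearMap ∘ₗ rTensor M δ := by
  refine TensorProduct.ext' fun a h => ?_
  let ρ (x : A ⊗[R] M) : A →ₗ[R] M := TensorProduct.lid R M ∘ₗ rTensor M (ε ∘ₗ μ) ∘ₗ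
    (TensorProduct.assoc R A A M).symm.toLinearMap ∘ₗ (mk R A (A ⊗[R] M)).flip x
  have hρ : ∀ x, lTensor A (ρ x) (δ a) =
      rTensor M μ ((TensorProduct.assoc R A A M).symm (a ⊗ₜ x)) := by
    intro x
    induction x using TensorProduct.induction_on with
    | zero => simp [ρ]
    | tmul b k =>
      have hρ_tmul : ρ (b ⊗ₜ k) = (ε ∘ₗ μ ∘ₗ (mk R A A).flip b).smulRight k := by
        ext d; simp [ρ]
      rw [hρ_tmul, lTensor_smulRight, rid_lTensor_mul_tmul_comul hfrob hcounit]
      simp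
    | add x y hx hy => simp_all [ρ, tmul_add, comp_add, lTensor_add]
  have hQS_flip : QS ∘ₗ (mk R A M).flip h = ρ (Q h) := by
    ext d; simp [ρ, hQS, rTensor_comp_apply]
  simp [lTensor_assoc_tmul, hQS_flip, hρ]

end Frobenius

end TensorProduct

namespace IsTensorPairing

variable {E F : Type*} [NormedAddCommGroup E] [InnerProductSpace ℂ E]
  [NormedAddCommGroup F] [InnerProductSpace ℂ F] {p : E ⊗[ℂ] F → E ⊗[ℂ] F → ℂ}

theorem apply_tmul_left_eq_inner_lid (hp : IsTensorPairing p) {u : E} {φ : E →ₗ[ℂ] ℂ}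
    (hφ : ∀ c, inner ℂ u c = φ c) (v : F) (t : E ⊗[ℂ] F) :
    p (u ⊗ₜ v) t = inner ℂ v (TensorProduct.lid ℂ F (rTensor F φ t)) := by
  obtain ⟨-, hadd, -, hsmul, htmul⟩ := hp
  induction t using TensorProduct.induction_on with
  | zero => simpa using hsmul 0 (u ⊗ₜ v) 0
  | tmul c d => simp [htmul, hφ, mul_comm]
  | add s t hs ht => simp [hadd, hs, ht]

theorem apply_tmul_right_eq_inner_rid (hp : IsTensorPairing p) {u : F} {φ : F →ₗ[ℂ] ℂ}
    (hφ : ∀ d, inner ℂ u d = φ d) (v : E) (t : E ⊗[ℂ] F) :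
    p (v ⊗ₜ u) t = inner ℂ v (TensorProduct.rid ℂ E (lTensor E φ t)) := by
  obtain ⟨-, hadd, -, hsmul, htmul⟩ := hp
  induction t using TensorProduct.induction_on with
  | zero => simpa using hsmul 0 (v ⊗ₜ u) 0
  | tmul c d => simp [htmul, hφ, mul_comm]
  | add s t hs ht => simp [hadd, hs, ht]

end IsTensorPairing

section AdjointUnit

variable {A : Type*} [NormedAddCommGroup A] [InnerProductSpace ℂ A]
  {p : A ⊗[ℂ] A → A ⊗[ℂ] A → ℂ} {m : A ⊗[ℂ] A →ₗ[ℂ] A} {i : ℂ →ₗ[ℂ] A}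
  {mS : A →ₗ[ℂ] A ⊗[ℂ] A} {iS : A →ₗ[ℂ] ℂ}

theorem AdjointWRT.inner_unit_eq (hi : AdjointWRT (innerP ℂ) (innerP A) i iS) (c : A) :
    inner ℂ (i 1) c = iS c := by
  simpa [innerP] using hi 1 c

theorem lid_rTensor_comp_adjoint_of_mul_rTensor_unit (hp : IsTensorPairing p)
    (hm : AdjointWRT p (innerP A) m mS) (hi : AdjointWRT (innerP ℂ) (innerP A) i iS)
    (hunit : m ∘ₗ rTensor A i = (TensorProduct.lid ℂ A).toLinearMap) :
    (TensorProduct.lid ℂ A).toLinearMap ∘ₗ rTensor A iS ∘ₗ mS = LinearMap.id := by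
  refine LinearMap.ext fun x => ext_inner_left ℂ fun v => ?_
  have hmi : m (i 1 ⊗ₜ v) = v := by simpa using LinearMap.congr_fun hunit (1 ⊗ₜ v)
  calc inner ℂ v (TensorProduct.lid ℂ A (rTensor A iS (mS x)))
      = p (i 1 ⊗ₜ v) (mS x) := (hp.apply_tmul_left_eq_inner_lid hi.inner_unit_eq v _).symm
    _ = inner ℂ v x := by rw [← hm]; simp [innerP, hmi]

theorem rid_lTensor_comp_adjoint_of_mul_lTensor_unit (hp : IsTensorPairing p)
    (hm : AdjointWRT p (innerP A) m mS) (hi : AdjointWRT (innerP ℂ) (innerP A) i iS)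
    (hunit : m ∘ₗ lTensor A i = (TensorProduct.rid ℂ A).toLinearMap) :
    (TensorProduct.rid ℂ A).toLinearMap ∘ₗ lTensor A iS ∘ₗ mS = LinearMap.id := by
  refine LinearMap.ext fun x => ext_inner_left ℂ fun v => ?_
  have hmi : m (v ⊗ₜ i 1) = v := by simpa using LinearMap.congr_fun hunit (v ⊗ₜ 1)
  calc inner ℂ v (TensorProduct.rid ℂ A (lTensor A iS (mS x)))
      = p (v ⊗ₜ i 1) (mS x) := (hp.apply_tmul_right_eq_inner_rid hi.inner_unit_eq v _).symm
    _ = inner ℂ v x := by rw [← hm]; simp [innerP, hmi]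

end AdjointUnit

theorem stmt1_general
    (A B H : Type*)
    [NormedAddCommGroup A] [InnerProductSpace ℂ A]
    [NormedAddCommGroup B] [InnerProductSpace ℂ B]
    [NormedAddCommGroup H] [InnerProductSpace ℂ H]
    (pAA : A ⊗[ℂ] A → A ⊗[ℂ] A → ℂ) (hpAA : IsTensorPairing pAA)
    (mA : A ⊗[ℂ] A →ₗ[ℂ] A) (iA : ℂ →ₗ[ℂ] A)
    (mAS : A →ₗ[ℂ] A ⊗[ℂ] A) (iAS : A →ₗ[ℂ] ℂ)
    (hmAS : AdjointWRT pAA (innerP A) mA mAS)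
    (hiAS : AdjointWRT (innerP ℂ) (innerP A) iA iAS)
    (hQA : QSystemEqs A mA iA mAS)
    (mB : B ⊗[ℂ] B →ₗ[ℂ] B)
    (mBS : B →ₗ[ℂ] B ⊗[ℂ] B) (iBS : B →ₗ[ℂ] ℂ)
    (Q1 : H →ₗ[ℂ] A ⊗[ℂ] H) (Q1S : A ⊗[ℂ] H →ₗ[ℂ] H)
    (Q2 : H →ₗ[ℂ] H ⊗[ℂ] B) (Q2S : H ⊗[ℂ] B →ₗ[ℂ] H)
    (hQBE : QBEEqs A B H mA iAS mAS mB iBS mBS Q1 Q2 Q1S Q2S)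
    :
    rTensor H mA ∘ₗ (TensorProduct.assoc ℂ A A H).symm.toLinearMap ∘ₗ lTensor A Q1 =
        Q1 ∘ₗ Q1S ∧
    Q1 ∘ₗ Q1S =
        lTensor A Q1S ∘ₗ (TensorProduct.assoc ℂ A A H).toLinearMap ∘ₗ rTensor H mAS := by
  obtain ⟨-, hunitL, hunitR, hfrobL, hfrobR, -⟩ := hQA
  obtain ⟨hcoassoc, -, -, -, -, hQ1S, -⟩ := hQBE
  have hcounitL := lid_rTensor_comp_adjoint_of_mul_rTensor_unit hpAA hmAS hiAS hunitL
  have hcounitR := rid_lTensor_comp_adjoint_of_mul_lTensor_unit hpAA hmAS hiAS hunitR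
  have hQ1Q1S := TensorProduct.rTensor_mul_comp_lTensor_eq_comp_of_coassoc
    hfrobL hcounitL hcoassoc hQ1S
  exact ⟨hQ1Q1S, hQ1Q1S.symm.trans
    (TensorProduct.rTensor_mul_comp_lTensor_eq_lTensor_comp_rTensor_comul hfrobR hcounitR hQ1S)⟩

/-- For a quantum bi-element `(H, Q1, Q2)` of a pair of
Q-systems `(A, mA, iA)`, `(B, mB, iB)` in Hilb, the Frobenius identities hold
for `Q1`: `(mA ⊗ 1_H)∘(1_A ⊗ Q1) = Q1∘Q1* = (1_A ⊗ Q1*)∘(mA* ⊗ 1_H)`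
as linear maps `A ⊗ H → A ⊗ H`. -/
theorem stmt1
    (A B H : Type*)
    [NormedAddCommGroup A] [InnerProductSpace ℂ A] [FiniteDimensional ℂ A]
    [NormedAddCommGroup B] [InnerProductSpace ℂ B] [FiniteDimensional ℂ B]
    [NormedAddCommGroup H] [InnerProductSpace ℂ H] [FiniteDimensional ℂ H]
    (pAA : A ⊗[ℂ] A → A ⊗[ℂ] A → ℂ) (hpAA : IsTensorPairing pAA)
    (pBB : B ⊗[ℂ] B → B ⊗[ℂ] B → ℂ) (hpBB : IsTensorPairing pBB)
    (pAH : A ⊗[ℂ] H → A ⊗[ℂ] H → ℂ) (hpAH : IsTensorPairing pAH)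
    (pHB : H ⊗[ℂ] B → H ⊗[ℂ] B → ℂ) (hpHB : IsTensorPairing pHB)
    (mA : A ⊗[ℂ] A →ₗ[ℂ] A) (iA : ℂ →ₗ[ℂ] A)
    (mAS : A →ₗ[ℂ] A ⊗[ℂ] A) (iAS : A →ₗ[ℂ] ℂ)
    (hmAS : AdjointWRT pAA (innerP A) mA mAS)
    (hiAS : AdjointWRT (innerP ℂ) (innerP A) iA iAS)
    (hQA : QSystemEqs A mA iA mAS)
    (mB : B ⊗[ℂ] B →ₗ[ℂ] B) (iB : ℂ →ₗ[ℂ] B)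
    (mBS : B →ₗ[ℂ] B ⊗[ℂ] B) (iBS : B →ₗ[ℂ] ℂ)
    (hmBS : AdjointWRT pBB (innerP B) mB mBS)
    (hiBS : AdjointWRT (innerP ℂ) (innerP B) iB iBS)
    (hQB : QSystemEqs B mB iB mBS)
    (Q1 : H →ₗ[ℂ] A ⊗[ℂ] H) (Q1S : A ⊗[ℂ] H →ₗ[ℂ] H)
    (hQ1S : AdjointWRT (innerP H) pAH Q1 Q1S)
    (Q2 : H →ₗ[ℂ] H ⊗[ℂ] B) (Q2S : H ⊗[ℂ] B →ₗ[ℂ] H)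
    (hQ2S : AdjointWRT (innerP H) pHB Q2 Q2S)
    (hQBE : QBEEqs A B H mA iAS mAS mB iBS mBS Q1 Q2 Q1S Q2S)
    :
    rTensor H mA ∘ₗ (TensorProduct.assoc ℂ A A H).symm.toLinearMap ∘ₗ lTensor A Q1 =
        Q1 ∘ₗ Q1S ∧
    Q1 ∘ₗ Q1S =
        lTensor A Q1S ∘ₗ (TensorProduct.assoc ℂ A A H).toLinearMap ∘ₗ rTensor H mAS :=
  stmt1_general A B H pAA hpAA mA iA mAS iAS hmAS hiAS hQA mB mBS iBS Q1 Q1S Q2 Q2S hQBE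
end
end

section
/- Let (A, m_A, i_A) and (B, m_B, i_B) be Q-systems in Hilb and let (H, Q1, Q2) be a quantum bi-element of the pair (A, B). Then the Frobenius identities hold for Q2: (1_H ⊗ m_B)∘(Q2 ⊗ 1_B) = Q2∘Q2* = (Q2* ⊗ 1_B)∘(1_H ⊗ m_B*) as linear maps H ⊗ B → H ⊗ B. -/
/-!
Q-systems in the C*-tensor category `Hilb` of finite dimensional complex Hilbert
spaces.  Tensor products of Hilbert spaces carry the natural inner product
`⟪a ⊗ b, c ⊗ d⟫ = ⟪a, c⟫ * ⟪b, d⟫`; since Mathlib does not provide this inner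
product structure on `TensorProduct`, we encode it by a pairing
`p : E ⊗ F → E ⊗ F → ℂ` together with the (uniquely determining) requirements
that it is sesquilinear and takes the natural values on elementary tensors
(`IsTensorPairing`).  Hilbert space adjoints are encoded as data together with
their (uniquely determining) defining property w.r.t. these pairings
(`AdjointWRT`).  Identifications along the canonical associator and unitor
isomorphisms are written explicitly via `TensorProduct.assoc`, `lid`, `rid`.
-/

open scoped TensorProduct
open LinearMap

noncomputable section

/-!
Write `Δ := m_B*` and `ε := i_B*`. By adjunction, unitality of `m_B` turns into the counit laws
`(1 ⊗ ε) ∘ Δ = 1 = (ε ⊗ 1) ∘ Δ`, and with the Frobenius condition these give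
`(1 ⊗ ε) ∘ (1 ⊗ m_B) ∘ (Δ ⊗ 1) = m_B = (ε ⊗ 1) ∘ (m_B ⊗ 1) ∘ (1 ⊗ Δ)`.
From then on the argument is pure algebra about the right `B`-comodule `(H, Q2)`:
`Q2*` is the action `(1 ⊗ ε) ∘ (1 ⊗ m_B) ∘ (Q2 ⊗ 1)`, and both identities follow by pushing
`Q2` through this formula and using coassociativity `(Q2 ⊗ 1) ∘ Q2 = (1 ⊗ Δ) ∘ Q2`.
-/

namespace FrobeniusComodule

open TensorProduct

variable {R B : Type*} [CommSemiring R] [AddCommMonoid B] [Module R B]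

def freeAction (m : B ⊗[R] B →ₗ[R] B) (N : Type*) [AddCommMonoid N] [Module R N] :
    (N ⊗[R] B) ⊗[R] B →ₗ[R] N ⊗[R] B :=
  lTensor N m ∘ₗ (TensorProduct.assoc R N B B).toLinearMap

def cofreeCoaction (Δ : B →ₗ[R] B ⊗[R] B) (N : Type*) [AddCommMonoid N] [Module R N] :
    N ⊗[R] B →ₗ[R] (N ⊗[R] B) ⊗[R] B :=
  (TensorProduct.assoc R N B B).symm.toLinearMap ∘ₗ lTensor N Δ

def rightCounit (ε : B →ₗ[R] R) (N : Type*) [AddCommMonoid N] [Module R N] :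
    N ⊗[R] B →ₗ[R] N :=
  (TensorProduct.rid R N).toLinearMap ∘ₗ lTensor N ε

def leftCounit (ε : B →ₗ[R] R) (N : Type*) [AddCommMonoid N] [Module R N] :
    B ⊗[R] N →ₗ[R] N :=
  (TensorProduct.lid R N).toLinearMap ∘ₗ rTensor N ε

def comoduleAction (m : B ⊗[R] B →ₗ[R] B) (ε : B →ₗ[R] R) {M : Type*} [AddCommMonoid M]
    [Module R M] (ρ : M →ₗ[R] M ⊗[R] B) : M ⊗[R] B →ₗ[R] M :=
  rightCounit ε M ∘ₗ freeAction m M ∘ₗ rTensor B ρ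

variable {N P M : Type*} [AddCommMonoid N] [Module R N] [AddCommMonoid P] [Module R P]
  [AddCommMonoid M] [Module R M]
variable (m : B ⊗[R] B →ₗ[R] B) (Δ : B →ₗ[R] B ⊗[R] B) (ε : B →ₗ[R] R)

theorem comp_rightCounit (f : N →ₗ[R] P) :
    f ∘ₗ rightCounit ε N = rightCounit ε P ∘ₗ rTensor B f := by
  ext n b
  simp [rightCounit]

theorem rTensor_comp_freeAction (f : N →ₗ[R] P) :
    rTensor B f ∘ₗ freeAction m N = freeAction m P ∘ₗ rTensor B (rTensor B f) := by
  ext n b c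
  simp [freeAction]

theorem rTensor_rTensor_comp_cofreeCoaction (f : N →ₗ[R] P) :
    rTensor B (rTensor B f) ∘ₗ cofreeCoaction Δ N = cofreeCoaction Δ P ∘ₗ rTensor B f := by
  ext n b
  simp only [cofreeCoaction, AlgebraTensorModule.curry_apply, curry_apply, coe_restrictScalars,
    comp_apply, rTensor_tmul, lTensor_tmul, LinearEquiv.coe_coe]
  induction Δ b using TensorProduct.induction_on with
  | zero => simp
  | tmul b₁ b₂ => simp
  | add s t hs ht => simp only [tmul_add, map_add, hs, ht]

theorem rightCounit_freeAction_rTensor_cofreeCoaction :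
    rightCounit ε (N ⊗[R] B) ∘ₗ freeAction m (N ⊗[R] B) ∘ₗ rTensor B (cofreeCoaction Δ N) =
      lTensor N (rightCounit ε B ∘ₗ freeAction m B ∘ₗ rTensor B Δ) ∘ₗ
        (TensorProduct.assoc R N B B).toLinearMap := by
  ext n b c
  simp only [cofreeCoaction, AlgebraTensorModule.curry_apply, curry_apply, coe_restrictScalars,
    comp_apply, rTensor_tmul, lTensor_tmul, LinearEquiv.coe_coe, assoc_tmul]
  induction Δ b using TensorProduct.induction_on with
  | zero => simp
  | tmul b₁ b₂ => simp [freeAction, rightCounit, smul_tmul']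
  | add s t hs ht => simp only [tmul_add, map_add, add_tmul, hs, ht]

theorem rTensor_rightCounit_freeAction_comp_cofreeCoaction :
    rTensor B (rightCounit ε N ∘ₗ freeAction m N) ∘ₗ cofreeCoaction Δ (N ⊗[R] B) =
      lTensor N (leftCounit ε B ∘ₗ rTensor B m ∘ₗ cofreeCoaction Δ B) ∘ₗ
        (TensorProduct.assoc R N B B).toLinearMap := by
  ext n b c
  simp only [cofreeCoaction, AlgebraTensorModule.curry_apply, curry_apply, coe_restrictScalars,
    comp_apply, lTensor_tmul, LinearEquiv.coe_coe, assoc_tmul]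
  induction Δ c using TensorProduct.induction_on with
  | zero => simp
  | tmul c₁ c₂ => simp [freeAction, rightCounit, leftCounit, smul_tmul']
  | add s t hs ht => simp only [tmul_add, map_add, hs, ht]

variable {m Δ ε} {ρ : M →ₗ[R] M ⊗[R] B}

theorem freeAction_rTensor_eq_comp_comoduleAction
    (hfrob : freeAction m B ∘ₗ rTensor B Δ = Δ ∘ₗ m)
    (hcounit : rightCounit ε B ∘ₗ Δ = LinearMap.id)
    (hρ : rTensor B ρ ∘ₗ ρ = cofreeCoaction Δ M ∘ₗ ρ) :
    freeAction m M ∘ₗ rTensor B ρ = ρ ∘ₗ comoduleAction m ε ρ := by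
  have hmul : rightCounit ε B ∘ₗ freeAction m B ∘ₗ rTensor B Δ = m := by
    rw [hfrob, ← comp_assoc, hcounit, id_comp]
  symm
  calc ρ ∘ₗ comoduleAction m ε ρ
      = (ρ ∘ₗ rightCounit ε M) ∘ₗ freeAction m M ∘ₗ rTensor B ρ := rfl
    _ = rightCounit ε (M ⊗[R] B) ∘ₗ (rTensor B ρ ∘ₗ freeAction m M) ∘ₗ rTensor B ρ := by
        rw [comp_rightCounit]; rfl
    _ = rightCounit ε (M ⊗[R] B) ∘ₗ freeAction m (M ⊗[R] B) ∘ₗ rTensor B (rTensor B ρ ∘ₗ ρ) := by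
        rw [rTensor_comp_freeAction, rTensor_comp]; rfl
    _ = (rightCounit ε (M ⊗[R] B) ∘ₗ freeAction m (M ⊗[R] B) ∘ₗ
          rTensor B (cofreeCoaction Δ M)) ∘ₗ rTensor B ρ := by
        rw [hρ, rTensor_comp]; rfl
    _ = freeAction m M ∘ₗ rTensor B ρ := by
        rw [rightCounit_freeAction_rTensor_cofreeCoaction, hmul]; rfl

theorem comp_comoduleAction_eq_rTensor_comp_cofreeCoaction
    (hfrob : freeAction m B ∘ₗ rTensor B Δ = Δ ∘ₗ m)
    (hcounit : rightCounit ε B ∘ₗ Δ = LinearMap.id)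
    (hfrob' : rTensor B m ∘ₗ cofreeCoaction Δ B = Δ ∘ₗ m)
    (hcounit' : leftCounit ε B ∘ₗ Δ = LinearMap.id)
    (hρ : rTensor B ρ ∘ₗ ρ = cofreeCoaction Δ M ∘ₗ ρ) :
    ρ ∘ₗ comoduleAction m ε ρ = rTensor B (comoduleAction m ε ρ) ∘ₗ cofreeCoaction Δ M := by
  have hmul : leftCounit ε B ∘ₗ rTensor B m ∘ₗ cofreeCoaction Δ B = m := by
    rw [hfrob', ← comp_assoc, hcounit', id_comp]
  calc ρ ∘ₗ comoduleAction m ε ρ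
      = freeAction m M ∘ₗ rTensor B ρ :=
        (freeAction_rTensor_eq_comp_comoduleAction hfrob hcounit hρ).symm
    _ = (rTensor B (rightCounit ε M ∘ₗ freeAction m M) ∘ₗ cofreeCoaction Δ (M ⊗[R] B)) ∘ₗ
          rTensor B ρ := by
        rw [rTensor_rightCounit_freeAction_comp_cofreeCoaction, hmul]; rfl
    _ = rTensor B (rightCounit ε M ∘ₗ freeAction m M) ∘ₗ rTensor B (rTensor B ρ) ∘ₗ
          cofreeCoaction Δ M := by
        rw [rTensor_rTensor_comp_cofreeCoaction]; rfl
    _ = rTensor B (comoduleAction m ε ρ) ∘ₗ cofreeCoaction Δ M := by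
        rw [← comp_assoc, ← rTensor_comp]; rfl

end FrobeniusComodule

open FrobeniusComodule

section Counit

variable {E B : Type*} [NormedAddCommGroup E] [InnerProductSpace ℂ E]
  [NormedAddCommGroup B] [InnerProductSpace ℂ B]

theorem IsTensorPairing.apply_zero_right {p : E ⊗[ℂ] B → E ⊗[ℂ] B → ℂ} (hp : IsTensorPairing p)
    (x : E ⊗[ℂ] B) : p x 0 = 0 := by
  simpa using hp.2.2.2.1 0 x 0

variable {η : ℂ →ₗ[ℂ] B} {ε : B →ₗ[ℂ] ℂ}

theorem inner_unit_eq_counit (hη : AdjointWRT (innerP ℂ) (innerP B) η ε) (b : B) :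
    inner ℂ (η 1) b = ε b := by
  simpa [innerP] using hη 1 b

theorem inner_rightCounit {p : E ⊗[ℂ] B → E ⊗[ℂ] B → ℂ} (hp : IsTensorPairing p)
    (hη : AdjointWRT (innerP ℂ) (innerP B) η ε) (c : E) (t : E ⊗[ℂ] B) :
    inner ℂ c (rightCounit ε E t) = p (c ⊗ₜ η 1) t := by
  induction t using TensorProduct.induction_on with
  | zero => simp [hp.apply_zero_right]
  | tmul x b => simp [rightCounit, hp.2.2.2.2, inner_unit_eq_counit hη, mul_comm]
  | add s t hs ht => simp [hp.2.1, hs, ht]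

theorem inner_leftCounit {p : B ⊗[ℂ] E → B ⊗[ℂ] E → ℂ} (hp : IsTensorPairing p)
    (hη : AdjointWRT (innerP ℂ) (innerP B) η ε) (c : E) (t : B ⊗[ℂ] E) :
    inner ℂ c (leftCounit ε E t) = p (η 1 ⊗ₜ c) t := by
  induction t using TensorProduct.induction_on with
  | zero => simp [hp.apply_zero_right]
  | tmul b x => simp [leftCounit, hp.2.2.2.2, inner_unit_eq_counit hη]
  | add s t hs ht => simp [hp.2.1, hs, ht]

variable {p : B ⊗[ℂ] B → B ⊗[ℂ] B → ℂ} {m : B ⊗[ℂ] B →ₗ[ℂ] B} {Δ : B →ₗ[ℂ] B ⊗[ℂ] B}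

theorem rightCounit_comp_adjoint_mul (hp : IsTensorPairing p)
    (hΔ : AdjointWRT p (innerP B) m Δ) (hη : AdjointWRT (innerP ℂ) (innerP B) η ε)
    (hunit : m ∘ₗ lTensor B η = (TensorProduct.rid ℂ B).toLinearMap) :
    rightCounit ε B ∘ₗ Δ = LinearMap.id := by
  refine LinearMap.ext fun b => ext_inner_left ℂ fun c => ?_
  have hc : m (c ⊗ₜ η 1) = c := by simpa using LinearMap.congr_fun hunit (c ⊗ₜ 1)
  rw [comp_apply, inner_rightCounit hp hη, ← hΔ, hc]
  rfl

theorem leftCounit_comp_adjoint_mul (hp : IsTensorPairing p)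
    (hΔ : AdjointWRT p (innerP B) m Δ) (hη : AdjointWRT (innerP ℂ) (innerP B) η ε)
    (hunit : m ∘ₗ rTensor B η = (TensorProduct.lid ℂ B).toLinearMap) :
    leftCounit ε B ∘ₗ Δ = LinearMap.id := by
  refine LinearMap.ext fun b => ext_inner_left ℂ fun c => ?_
  have hc : m (η 1 ⊗ₜ c) = c := by simpa using LinearMap.congr_fun hunit (1 ⊗ₜ c)
  rw [comp_apply, inner_leftCounit hp hη, ← hΔ, hc]
  rfl

end Counit

theorem stmt2_general
    (A B H : Type*)
    [NormedAddCommGroup A] [InnerProductSpace ℂ A]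
    [NormedAddCommGroup B] [InnerProductSpace ℂ B]
    [NormedAddCommGroup H] [InnerProductSpace ℂ H]
    (pBB : B ⊗[ℂ] B → B ⊗[ℂ] B → ℂ) (hpBB : IsTensorPairing pBB)
    (mA : A ⊗[ℂ] A →ₗ[ℂ] A)
    (mAS : A →ₗ[ℂ] A ⊗[ℂ] A) (iAS : A →ₗ[ℂ] ℂ)
    (mB : B ⊗[ℂ] B →ₗ[ℂ] B) (iB : ℂ →ₗ[ℂ] B)
    (mBS : B →ₗ[ℂ] B ⊗[ℂ] B) (iBS : B →ₗ[ℂ] ℂ)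
    (hmBS : AdjointWRT pBB (innerP B) mB mBS)
    (hiBS : AdjointWRT (innerP ℂ) (innerP B) iB iBS)
    (hQB : QSystemEqs B mB iB mBS)
    (Q1 : H →ₗ[ℂ] A ⊗[ℂ] H) (Q1S : A ⊗[ℂ] H →ₗ[ℂ] H)
    (Q2 : H →ₗ[ℂ] H ⊗[ℂ] B) (Q2S : H ⊗[ℂ] B →ₗ[ℂ] H)
    (hQBE : QBEEqs A B H mA iAS mAS mB iBS mBS Q1 Q2 Q1S Q2S)
    :
    lTensor H mB ∘ₗ (TensorProduct.assoc ℂ H B B).toLinearMap ∘ₗ rTensor B Q2 =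
        Q2 ∘ₗ Q2S ∧
    Q2 ∘ₗ Q2S =
        rTensor B Q2S ∘ₗ (TensorProduct.assoc ℂ H B B).symm.toLinearMap ∘ₗ lTensor H mBS := by
  obtain ⟨-, hunitl, hunitr, hfrob', hfrob, -⟩ := hQB
  obtain ⟨-, hcoassoc, -, -, -, -, rfl⟩ := hQBE
  have hcounit := rightCounit_comp_adjoint_mul hpBB hmBS hiBS hunitr
  have hcounit' := leftCounit_comp_adjoint_mul hpBB hmBS hiBS hunitl
  exact ⟨freeAction_rTensor_eq_comp_comoduleAction hfrob hcounit hcoassoc,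
    comp_comoduleAction_eq_rTensor_comp_cofreeCoaction hfrob hcounit hfrob' hcounit' hcoassoc⟩

/-- For a quantum bi-element `(H, Q1, Q2)` of a pair of
Q-systems `(A, mA, iA)`, `(B, mB, iB)` in Hilb, the Frobenius identities hold
for `Q2`: `(1_H ⊗ mB)∘(Q2 ⊗ 1_B) = Q2∘Q2* = (Q2* ⊗ 1_B)∘(1_H ⊗ mB*)`
as linear maps `H ⊗ B → H ⊗ B`. -/
theorem stmt2
    (A B H : Type*)
    [NormedAddCommGroup A] [InnerProductSpace ℂ A] [FiniteDimensional ℂ A]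
    [NormedAddCommGroup B] [InnerProductSpace ℂ B] [FiniteDimensional ℂ B]
    [NormedAddCommGroup H] [InnerProductSpace ℂ H] [FiniteDimensional ℂ H]
    (pAA : A ⊗[ℂ] A → A ⊗[ℂ] A → ℂ) (hpAA : IsTensorPairing pAA)
    (pBB : B ⊗[ℂ] B → B ⊗[ℂ] B → ℂ) (hpBB : IsTensorPairing pBB)
    (pAH : A ⊗[ℂ] H → A ⊗[ℂ] H → ℂ) (hpAH : IsTensorPairing pAH)
    (pHB : H ⊗[ℂ] B → H ⊗[ℂ] B → ℂ) (hpHB : IsTensorPairing pHB)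
    (mA : A ⊗[ℂ] A →ₗ[ℂ] A) (iA : ℂ →ₗ[ℂ] A)
    (mAS : A →ₗ[ℂ] A ⊗[ℂ] A) (iAS : A →ₗ[ℂ] ℂ)
    (hmAS : AdjointWRT pAA (innerP A) mA mAS)
    (hiAS : AdjointWRT (innerP ℂ) (innerP A) iA iAS)
    (hQA : QSystemEqs A mA iA mAS)
    (mB : B ⊗[ℂ] B →ₗ[ℂ] B) (iB : ℂ →ₗ[ℂ] B)
    (mBS : B →ₗ[ℂ] B ⊗[ℂ] B) (iBS : B →ₗ[ℂ] ℂ)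
    (hmBS : AdjointWRT pBB (innerP B) mB mBS)
    (hiBS : AdjointWRT (innerP ℂ) (innerP B) iB iBS)
    (hQB : QSystemEqs B mB iB mBS)
    (Q1 : H →ₗ[ℂ] A ⊗[ℂ] H) (Q1S : A ⊗[ℂ] H →ₗ[ℂ] H)
    (hQ1S : AdjointWRT (innerP H) pAH Q1 Q1S)
    (Q2 : H →ₗ[ℂ] H ⊗[ℂ] B) (Q2S : H ⊗[ℂ] B →ₗ[ℂ] H)
    (hQ2S : AdjointWRT (innerP H) pHB Q2 Q2S)
    (hQBE : QBEEqs A B H mA iAS mAS mB iBS mBS Q1 Q2 Q1S Q2S)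
    :
    lTensor H mB ∘ₗ (TensorProduct.assoc ℂ H B B).toLinearMap ∘ₗ rTensor B Q2 =
        Q2 ∘ₗ Q2S ∧
    Q2 ∘ₗ Q2S =
        rTensor B Q2S ∘ₗ (TensorProduct.assoc ℂ H B B).symm.toLinearMap ∘ₗ lTensor H mBS :=
  stmt2_general A B H pBB hpBB mA mAS iAS mB iB mBS iBS hmBS hiBS hQB Q1 Q1S Q2 Q2S hQBE
end
end

section
/- Let (A, m_A, i_A) and (B, m_B, i_B) be Q-systems in Hilb and let (H, Q1, Q2) be a quantum bi-element of the pair (A, B). Then Q1 and Q2 are isometries, i.e. Q1*∘Q1 = 1_H and Q2*∘Q2 = 1_H. -/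
/-!
Q-systems in the C*-tensor category `Hilb` of finite dimensional complex Hilbert
spaces.  Tensor products of Hilbert spaces carry the natural inner product
`⟪a ⊗ b, c ⊗ d⟫ = ⟪a, c⟫ * ⟪b, d⟫`; since Mathlib does not provide this inner
product structure on `TensorProduct`, we encode it by a pairing
`p : E ⊗ F → E ⊗ F → ℂ` together with the (uniquely determining) requirements
that it is sesquilinear and takes the natural values on elementary tensors
(`IsTensorPairing`).  Hilbert space adjoints are encoded as data together with
their (uniquely determining) defining property w.r.t. these pairings
(`AdjointWRT`).  Identifications along the canonical associator and unitor
isomorphisms are written explicitly via `TensorProduct.assoc`, `lid`, `rid`.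
-/

open scoped TensorProduct
open LinearMap

noncomputable section

/-!
`Q1* ∘ Q1 = (iA* ⊗ 1)(mA ⊗ 1)(1 ⊗ Q1) Q1`.  Coassociativity of `Q1` turns `(1 ⊗ Q1) Q1` into
`(mA* ⊗ 1) Q1`, separability `mA mA* = 1` removes the multiplication, and the counit
condition `(iA* ⊗ 1) Q1 = 1` finishes.  The argument for `Q2` is the mirror image.
-/

section Coaction

variable {R A B H : Type*} [CommSemiring R]
  [AddCommMonoid A] [Module R A] [AddCommMonoid B] [Module R B] [AddCommMonoid H] [Module R H]

theorem rTensor_mul_comp_lTensor_comp_eq_self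
    {m : A ⊗[R] A →ₗ[R] A} {mS : A →ₗ[R] A ⊗[R] A} {Q : H →ₗ[R] A ⊗[R] H}
    (hQ : lTensor A Q ∘ₗ Q = (TensorProduct.assoc R A A H).toLinearMap ∘ₗ rTensor H mS ∘ₗ Q)
    (hsep : m ∘ₗ mS = LinearMap.id) :
    rTensor H m ∘ₗ (TensorProduct.assoc R A A H).symm.toLinearMap ∘ₗ lTensor A Q ∘ₗ Q = Q := by
  calc rTensor H m ∘ₗ (TensorProduct.assoc R A A H).symm.toLinearMap ∘ₗ lTensor A Q ∘ₗ Q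
      = rTensor H m ∘ₗ ((TensorProduct.assoc R A A H).symm.toLinearMap ∘ₗ
          (TensorProduct.assoc R A A H).toLinearMap) ∘ₗ rTensor H mS ∘ₗ Q := by
        rw [hQ, comp_assoc]
    _ = rTensor H (m ∘ₗ mS) ∘ₗ Q := by
        rw [LinearEquiv.symm_comp, id_comp, rTensor_comp, comp_assoc]
    _ = Q := by rw [hsep, rTensor_id, id_comp]

theorem lTensor_mul_comp_rTensor_comp_eq_self
    {m : B ⊗[R] B →ₗ[R] B} {mS : B →ₗ[R] B ⊗[R] B} {Q : H →ₗ[R] H ⊗[R] B}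
    (hQ : rTensor B Q ∘ₗ Q = (TensorProduct.assoc R H B B).symm.toLinearMap ∘ₗ lTensor H mS ∘ₗ Q)
    (hsep : m ∘ₗ mS = LinearMap.id) :
    lTensor H m ∘ₗ (TensorProduct.assoc R H B B).toLinearMap ∘ₗ rTensor B Q ∘ₗ Q = Q := by
  calc lTensor H m ∘ₗ (TensorProduct.assoc R H B B).toLinearMap ∘ₗ rTensor B Q ∘ₗ Q
      = lTensor H m ∘ₗ ((TensorProduct.assoc R H B B).toLinearMap ∘ₗ
          (TensorProduct.assoc R H B B).symm.toLinearMap) ∘ₗ lTensor H mS ∘ₗ Q := by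
        rw [hQ, comp_assoc]
    _ = lTensor H (m ∘ₗ mS) ∘ₗ Q := by
        rw [LinearEquiv.comp_symm, id_comp, lTensor_comp, comp_assoc]
    _ = Q := by rw [hsep, lTensor_id, id_comp]

end Coaction

theorem stmt3_general
    (A B H : Type*)
    [NormedAddCommGroup A] [InnerProductSpace ℂ A]
    [NormedAddCommGroup B] [InnerProductSpace ℂ B]
    [NormedAddCommGroup H] [InnerProductSpace ℂ H]
    (mA : A ⊗[ℂ] A →ₗ[ℂ] A) (iA : ℂ →ₗ[ℂ] A)
    (mAS : A →ₗ[ℂ] A ⊗[ℂ] A) (iAS : A →ₗ[ℂ] ℂ)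
    (hQA : QSystemEqs A mA iA mAS)
    (mB : B ⊗[ℂ] B →ₗ[ℂ] B) (iB : ℂ →ₗ[ℂ] B)
    (mBS : B →ₗ[ℂ] B ⊗[ℂ] B) (iBS : B →ₗ[ℂ] ℂ)
    (hQB : QSystemEqs B mB iB mBS)
    (Q1 : H →ₗ[ℂ] A ⊗[ℂ] H) (Q1S : A ⊗[ℂ] H →ₗ[ℂ] H)
    (Q2 : H →ₗ[ℂ] H ⊗[ℂ] B) (Q2S : H ⊗[ℂ] B →ₗ[ℂ] H)
    (hQBE : QBEEqs A B H mA iAS mAS mB iBS mBS Q1 Q2 Q1S Q2S)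
    :
    Q1S ∘ₗ Q1 = LinearMap.id ∧ Q2S ∘ₗ Q2 = LinearMap.id := by
  obtain ⟨hQ1, hQ2, -, hcounit1, hcounit2, rfl, rfl⟩ := hQBE
  have hsepA : mA ∘ₗ mAS = LinearMap.id := hQA.2.2.2.2.2
  have hsepB : mB ∘ₗ mBS = LinearMap.id := hQB.2.2.2.2.2
  constructor
  · simp only [comp_assoc, rTensor_mul_comp_lTensor_comp_eq_self hQ1 hsepA, hcounit1]
  · simp only [comp_assoc, lTensor_mul_comp_rTensor_comp_eq_self hQ2 hsepB, hcounit2]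

/-- For a quantum bi-element `(H, Q1, Q2)` of a pair of
Q-systems in Hilb, `Q1` and `Q2` are isometries: `Q1*∘Q1 = 1_H` and
`Q2*∘Q2 = 1_H`. -/
theorem stmt3
    (A B H : Type*)
    [NormedAddCommGroup A] [InnerProductSpace ℂ A] [FiniteDimensional ℂ A]
    [NormedAddCommGroup B] [InnerProductSpace ℂ B] [FiniteDimensional ℂ B]
    [NormedAddCommGroup H] [InnerProductSpace ℂ H] [FiniteDimensional ℂ H]
    (pAA : A ⊗[ℂ] A → A ⊗[ℂ] A → ℂ) (hpAA : IsTensorPairing pAA)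
    (pBB : B ⊗[ℂ] B → B ⊗[ℂ] B → ℂ) (hpBB : IsTensorPairing pBB)
    (pAH : A ⊗[ℂ] H → A ⊗[ℂ] H → ℂ) (hpAH : IsTensorPairing pAH)
    (pHB : H ⊗[ℂ] B → H ⊗[ℂ] B → ℂ) (hpHB : IsTensorPairing pHB)
    (mA : A ⊗[ℂ] A →ₗ[ℂ] A) (iA : ℂ →ₗ[ℂ] A)
    (mAS : A →ₗ[ℂ] A ⊗[ℂ] A) (iAS : A →ₗ[ℂ] ℂ)
    (hmAS : AdjointWRT pAA (innerP A) mA mAS)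
    (hiAS : AdjointWRT (innerP ℂ) (innerP A) iA iAS)
    (hQA : QSystemEqs A mA iA mAS)
    (mB : B ⊗[ℂ] B →ₗ[ℂ] B) (iB : ℂ →ₗ[ℂ] B)
    (mBS : B →ₗ[ℂ] B ⊗[ℂ] B) (iBS : B →ₗ[ℂ] ℂ)
    (hmBS : AdjointWRT pBB (innerP B) mB mBS)
    (hiBS : AdjointWRT (innerP ℂ) (innerP B) iB iBS)
    (hQB : QSystemEqs B mB iB mBS)
    (Q1 : H →ₗ[ℂ] A ⊗[ℂ] H) (Q1S : A ⊗[ℂ] H →ₗ[ℂ] H)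
    (hQ1S : AdjointWRT (innerP H) pAH Q1 Q1S)
    (Q2 : H →ₗ[ℂ] H ⊗[ℂ] B) (Q2S : H ⊗[ℂ] B →ₗ[ℂ] H)
    (hQ2S : AdjointWRT (innerP H) pHB Q2 Q2S)
    (hQBE : QBEEqs A B H mA iAS mAS mB iBS mBS Q1 Q2 Q1S Q2S)
    :
    Q1S ∘ₗ Q1 = LinearMap.id ∧ Q2S ∘ₗ Q2 = LinearMap.id :=
  stmt3_general A B H mA iA mAS iAS hQA mB iB mBS iBS hQB Q1 Q1S Q2 Q2S hQBE
end
end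

section
/- Let (A, m_A, i_A) and (B, m_B, i_B) be Q-systems in Hilb and let (H, Q1, Q2) be a quantum bi-element of the pair (A, B). Then Q1∘Q2* = (1_A ⊗ Q2*)∘(Q1 ⊗ 1_B) as linear maps H ⊗ B → A ⊗ H. -/
/-!
Q-systems in the C*-tensor category `Hilb` of finite dimensional complex Hilbert
spaces.  Tensor products of Hilbert spaces carry the natural inner product
`⟪a ⊗ b, c ⊗ d⟫ = ⟪a, c⟫ * ⟪b, d⟫`; since Mathlib does not provide this inner
product structure on `TensorProduct`, we encode it by a pairing
`p : E ⊗ F → E ⊗ F → ℂ` together with the (uniquely determining) requirements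
that it is sesquilinear and takes the natural values on elementary tensors
(`IsTensorPairing`).  Hilbert space adjoints are encoded as data together with
their (uniquely determining) defining property w.r.t. these pairings
(`AdjointWRT`).  Identifications along the canonical associator and unitor
isomorphisms are written explicitly via `TensorProduct.assoc`, `lid`, `rid`.
-/

open scoped TensorProduct
open LinearMap

noncomputable section

/-!
Formula (3) says that `Q2*` is `Q2 ⊗ 1_B` followed by contracting the two `B`-legs with the
form `iB* ∘ mB : B ⊗ B → ℂ`. The contraction only acts on `B`-legs, so it commutes with `Q1`
acting on the `H`-leg; together with the commutation `(1_A ⊗ Q2) ∘ Q1 = (Q1 ⊗ 1_B) ∘ Q2`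
from (1), this moves `Q1` past `Q2*`.
-/

section Contraction

open TensorProduct (assoc rid)

variable {R A B H K : Type*} [CommSemiring R]
  [AddCommMonoid A] [Module R A] [AddCommMonoid B] [Module R B]
  [AddCommMonoid H] [Module R H] [AddCommMonoid K] [Module R K]

def contractLastTwo (β : B ⊗[R] B →ₗ[R] R) : (H ⊗[R] B) ⊗[R] B →ₗ[R] H :=
  (rid R H).toLinearMap ∘ₗ lTensor H β ∘ₗ (assoc R H B B).toLinearMap

@[simp] lemma contractLastTwo_tmul (β : B ⊗[R] B →ₗ[R] R) (h : H) (b b' : B) :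
    contractLastTwo β ((h ⊗ₜ[R] b) ⊗ₜ[R] b') = β (b ⊗ₜ[R] b') • h := rfl

lemma comp_contractLastTwo (β : B ⊗[R] B →ₗ[R] R) (f : H →ₗ[R] K) :
    f ∘ₗ contractLastTwo β = contractLastTwo β ∘ₗ rTensor B (rTensor B f) := by
  ext h b b'
  simp

lemma lTensor_contractLastTwo_comp_assoc (β : B ⊗[R] B →ₗ[R] R) :
    lTensor A (contractLastTwo (H := H) β) ∘ₗ (assoc R A (H ⊗[R] B) B).toLinearMap ∘ₗ
        rTensor B (assoc R A H B).toLinearMap =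
      contractLastTwo β := by
  ext a h b b'
  simp [TensorProduct.tmul_smul]

theorem comp_contractLastTwo_rTensor_of_commute {Q1 : H →ₗ[R] A ⊗[R] H}
    {Q2 : H →ₗ[R] H ⊗[R] B}
    (hQ : lTensor A Q2 ∘ₗ Q1 = (assoc R A H B).toLinearMap ∘ₗ rTensor B Q1 ∘ₗ Q2)
    (β : B ⊗[R] B →ₗ[R] R) :
    Q1 ∘ₗ contractLastTwo β ∘ₗ rTensor B Q2 =
      lTensor A (contractLastTwo β ∘ₗ rTensor B Q2) ∘ₗ (assoc R A H B).toLinearMap ∘ₗ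
        rTensor B Q1 := by
  symm
  calc lTensor A (contractLastTwo β ∘ₗ rTensor B Q2) ∘ₗ (assoc R A H B).toLinearMap ∘ₗ
        rTensor B Q1
      = lTensor A (contractLastTwo β) ∘ₗ (assoc R A (H ⊗[R] B) B).toLinearMap ∘ₗ
          rTensor B (lTensor A Q2 ∘ₗ Q1) := by
        rw [lTensor_comp, rTensor_comp, comp_assoc]
        congr 1
        rw [← comp_assoc, lTensor_rTensor_comp_assoc, comp_assoc]
    _ = (lTensor A (contractLastTwo β) ∘ₗ (assoc R A (H ⊗[R] B) B).toLinearMap ∘ₗ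
          rTensor B (assoc R A H B).toLinearMap) ∘ₗ rTensor B (rTensor B Q1) ∘ₗ rTensor B Q2 := by
        rw [hQ, rTensor_comp, rTensor_comp]
        rfl
    _ = Q1 ∘ₗ contractLastTwo β ∘ₗ rTensor B Q2 := by
        rw [lTensor_contractLastTwo_comp_assoc, ← comp_assoc, ← comp_contractLastTwo, comp_assoc]

end Contraction

theorem stmt4_general
    (A B H : Type*)
    [NormedAddCommGroup A] [InnerProductSpace ℂ A]
    [NormedAddCommGroup B] [InnerProductSpace ℂ B]
    [NormedAddCommGroup H] [InnerProductSpace ℂ H]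
    (mA : A ⊗[ℂ] A →ₗ[ℂ] A)
    (mAS : A →ₗ[ℂ] A ⊗[ℂ] A) (iAS : A →ₗ[ℂ] ℂ)
    (mB : B ⊗[ℂ] B →ₗ[ℂ] B)
    (mBS : B →ₗ[ℂ] B ⊗[ℂ] B) (iBS : B →ₗ[ℂ] ℂ)
    (Q1 : H →ₗ[ℂ] A ⊗[ℂ] H) (Q1S : A ⊗[ℂ] H →ₗ[ℂ] H)
    (Q2 : H →ₗ[ℂ] H ⊗[ℂ] B) (Q2S : H ⊗[ℂ] B →ₗ[ℂ] H)
    (hQBE : QBEEqs A B H mA iAS mAS mB iBS mBS Q1 Q2 Q1S Q2S)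
    :
    Q1 ∘ₗ Q2S =
        lTensor A Q2S ∘ₗ (TensorProduct.assoc ℂ A H B).toLinearMap ∘ₗ rTensor B Q1 := by
  obtain ⟨-, -, hQ12, -, -, -, hQ2S⟩ := hQBE
  have hQ2S_eq_contract : Q2S = contractLastTwo (iBS ∘ₗ mB) ∘ₗ rTensor B Q2 := by
    rw [hQ2S, contractLastTwo, lTensor_comp]
    rfl
  rw [hQ2S_eq_contract]
  exact comp_contractLastTwo_rTensor_of_commute hQ12 _

/-- For a quantum bi-element `(H, Q1, Q2)` of a pair of
Q-systems in Hilb, `Q1∘Q2* = (1_A ⊗ Q2*)∘(Q1 ⊗ 1_B)` as linear maps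
`H ⊗ B → A ⊗ H`. -/
theorem stmt4
    (A B H : Type*)
    [NormedAddCommGroup A] [InnerProductSpace ℂ A] [FiniteDimensional ℂ A]
    [NormedAddCommGroup B] [InnerProductSpace ℂ B] [FiniteDimensional ℂ B]
    [NormedAddCommGroup H] [InnerProductSpace ℂ H] [FiniteDimensional ℂ H]
    (pAA : A ⊗[ℂ] A → A ⊗[ℂ] A → ℂ) (hpAA : IsTensorPairing pAA)
    (pBB : B ⊗[ℂ] B → B ⊗[ℂ] B → ℂ) (hpBB : IsTensorPairing pBB)
    (pAH : A ⊗[ℂ] H → A ⊗[ℂ] H → ℂ) (hpAH : IsTensorPairing pAH)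
    (pHB : H ⊗[ℂ] B → H ⊗[ℂ] B → ℂ) (hpHB : IsTensorPairing pHB)
    (mA : A ⊗[ℂ] A →ₗ[ℂ] A) (iA : ℂ →ₗ[ℂ] A)
    (mAS : A →ₗ[ℂ] A ⊗[ℂ] A) (iAS : A →ₗ[ℂ] ℂ)
    (hmAS : AdjointWRT pAA (innerP A) mA mAS)
    (hiAS : AdjointWRT (innerP ℂ) (innerP A) iA iAS)
    (hQA : QSystemEqs A mA iA mAS)
    (mB : B ⊗[ℂ] B →ₗ[ℂ] B) (iB : ℂ →ₗ[ℂ] B)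
    (mBS : B →ₗ[ℂ] B ⊗[ℂ] B) (iBS : B →ₗ[ℂ] ℂ)
    (hmBS : AdjointWRT pBB (innerP B) mB mBS)
    (hiBS : AdjointWRT (innerP ℂ) (innerP B) iB iBS)
    (hQB : QSystemEqs B mB iB mBS)
    (Q1 : H →ₗ[ℂ] A ⊗[ℂ] H) (Q1S : A ⊗[ℂ] H →ₗ[ℂ] H)
    (hQ1S : AdjointWRT (innerP H) pAH Q1 Q1S)
    (Q2 : H →ₗ[ℂ] H ⊗[ℂ] B) (Q2S : H ⊗[ℂ] B →ₗ[ℂ] H)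
    (hQ2S : AdjointWRT (innerP H) pHB Q2 Q2S)
    (hQBE : QBEEqs A B H mA iAS mAS mB iBS mBS Q1 Q2 Q1S Q2S)
    :
    Q1 ∘ₗ Q2S =
        lTensor A Q2S ∘ₗ (TensorProduct.assoc ℂ A H B).toLinearMap ∘ₗ rTensor B Q1 :=
  stmt4_general A B H mA mAS iAS mB mBS iBS Q1 Q1S Q2 Q2S hQBE
end
end

section
/- Let (A, m_A, i_A) and (B, m_B, i_B) be Q-systems in Hilb, let (H, Q1, Q2) be a quantum bi-element of the pair (A, B), and set P := Q1∘Q2* : H ⊗ B → A ⊗ H. Then P satisfies the adjoint axiom of a quantum function from B to A: P* = ((i_A*∘m_A) ⊗ 1_H ⊗ 1_B)∘(1_A ⊗ P ⊗ 1_B)∘(1_A ⊗ 1_H ⊗ (m_B*∘i_B)) as linear maps A ⊗ H → H ⊗ B (identifying along the canonical associators and unitors). -/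
/-!
Q-systems in the C*-tensor category `Hilb` of finite dimensional complex Hilbert
spaces.  Tensor products of Hilbert spaces carry the natural inner product
`⟪a ⊗ b, c ⊗ d⟫ = ⟪a, c⟫ * ⟪b, d⟫`; since Mathlib does not provide this inner
product structure on `TensorProduct`, we encode it by a pairing
`p : E ⊗ F → E ⊗ F → ℂ` together with the (uniquely determining) requirements
that it is sesquilinear and takes the natural values on elementary tensors
(`IsTensorPairing`).  Hilbert space adjoints are encoded as data together with
their (uniquely determining) defining property w.r.t. these pairings
(`AdjointWRT`).  Identifications along the canonical associator and unitor
isomorphisms are written explicitly via `TensorProduct.assoc`, `lid`, `rid`.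
-/

open scoped TensorProduct
open LinearMap

noncomputable section

/-!
The pairing on `H ⊗ B` is the inner product of `H ⊗ B`, so adjoints are unique there and
`P* = (Q1 ∘ Q2*)* = Q2 ∘ Q1*`. Write `ε_X = i_X* ∘ m_X` and `η_B = m_B* ∘ i_B`. By axiom (3),
`Q1* = (ε_A ⊗ 1) ∘ (1 ⊗ Q1)` and `Q2* = (1 ⊗ ε_B) ∘ (Q2 ⊗ 1)`. Frobenius, unitality and the
adjoint of unitality give the zigzag identity `(ε_B ⊗ 1) ∘ (1 ⊗ η_B) = 1_B`, hence
`(Q2* ⊗ 1) ∘ (1 ⊗ η_B) = Q2`. The right-hand side thus collapses to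
`(ε_A ⊗ 1) ∘ (1 ⊗ (Q1 ⊗ 1) ∘ Q2)`, which by the interchange law `(1 ⊗ Q2) ∘ Q1 = (Q1 ⊗ 1) ∘ Q2`
and naturality of `ε_A ⊗ 1` equals `Q2 ∘ (ε_A ⊗ 1) ∘ (1 ⊗ Q1) = Q2 ∘ Q1*`.
-/

namespace IsTensorPairing

variable {E F : Type*} [NormedAddCommGroup E] [InnerProductSpace ℂ E]
    [NormedAddCommGroup F] [InnerProductSpace ℂ F] {p : E ⊗[ℂ] F → E ⊗[ℂ] F → ℂ}

lemma eq_innerP (hp : IsTensorPairing p) : p = innerP (E ⊗[ℂ] F) := by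
  obtain ⟨add_left, add_right, -, -, tmul_tmul⟩ := hp
  have zero_left : ∀ y, p 0 y = 0 := fun y => by simpa using add_left 0 0 y
  have zero_right : ∀ x, p x 0 = 0 := fun x => by simpa using add_right x 0 0
  funext x y
  induction x using TensorProduct.induction_on with
  | zero => simp [innerP, zero_left]
  | add x x' hx hx' => simp only [innerP, add_left, hx, hx', inner_add_left]
  | tmul a b =>
    induction y using TensorProduct.induction_on with
    | zero => simp [innerP, zero_right]
    | add y y' hy hy' => simp only [innerP, add_right, hy, hy', inner_add_right]
    | tmul c d => simp [innerP, tmul_tmul]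

end IsTensorPairing

namespace AdjointWRT

variable {X Y Z : Type*}

lemma comp [AddCommMonoid X] [Module ℂ X] [AddCommMonoid Y] [Module ℂ Y]
    [AddCommMonoid Z] [Module ℂ Z] {pX : X → X → ℂ} {pY : Y → Y → ℂ} {pZ : Z → Z → ℂ}
    {f : X →ₗ[ℂ] Y} {g : Y →ₗ[ℂ] X} {f' : Y →ₗ[ℂ] Z} {g' : Z →ₗ[ℂ] Y}
    (h : AdjointWRT pX pY f g) (h' : AdjointWRT pY pZ f' g') :
    AdjointWRT pX pZ (f' ∘ₗ f) (g ∘ₗ g') :=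
  fun x z => (h' (f x) z).trans (h x (g' z))

variable [NormedAddCommGroup X] [InnerProductSpace ℂ X]

lemma symm [NormedAddCommGroup Y] [InnerProductSpace ℂ Y] {f : X →ₗ[ℂ] Y} {g : Y →ₗ[ℂ] X}
    (h : AdjointWRT (innerP X) (innerP Y) f g) : AdjointWRT (innerP Y) (innerP X) g f :=
  fun y x => by
    have hxy : inner ℂ (f x) y = inner ℂ x (g y) := h x y
    simp only [innerP]
    rw [← inner_conj_symm, ← hxy, inner_conj_symm]

lemma unique [AddCommMonoid Y] [Module ℂ Y] {pY : Y → Y → ℂ} {f : X →ₗ[ℂ] Y}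
    {g g' : Y →ₗ[ℂ] X} (h : AdjointWRT (innerP X) pY f g) (h' : AdjointWRT (innerP X) pY f g') :
    g = g' :=
  LinearMap.ext fun y => ext_inner_left ℂ fun x => (h x y).symm.trans (h' x y)

end AdjointWRT

lemma rTensor_rTensor_assoc_symm {M N P Q : Type*} [AddCommGroup M] [Module ℂ M]
    [AddCommGroup N] [Module ℂ N] [AddCommGroup P] [Module ℂ P] [AddCommGroup Q] [Module ℂ Q]
    (f : M →ₗ[ℂ] N) (x : M ⊗[ℂ] (P ⊗[ℂ] Q)) :
    rTensor Q (rTensor P f) ((TensorProduct.assoc ℂ M P Q).symm x) =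
      (TensorProduct.assoc ℂ N P Q).symm (rTensor (P ⊗[ℂ] Q) f x) := by
  simpa [rTensor, TensorProduct.map_id] using
    TensorProduct.map_map_assoc_symm f LinearMap.id LinearMap.id x

section Caps

variable {A M : Type*} [AddCommGroup A] [Module ℂ A] [AddCommGroup M] [Module ℂ M]

def capLeft (ε : A ⊗[ℂ] A →ₗ[ℂ] ℂ) : A ⊗[ℂ] (A ⊗[ℂ] M) →ₗ[ℂ] M :=
  (TensorProduct.lid ℂ M).toLinearMap ∘ₗ rTensor M ε ∘ₗ
    (TensorProduct.assoc ℂ A A M).symm.toLinearMap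

def capRight (ε : A ⊗[ℂ] A →ₗ[ℂ] ℂ) : (M ⊗[ℂ] A) ⊗[ℂ] A →ₗ[ℂ] M :=
  (TensorProduct.rid ℂ M).toLinearMap ∘ₗ lTensor M ε ∘ₗ
    (TensorProduct.assoc ℂ M A A).toLinearMap

@[simp]
lemma capLeft_tmul (ε : A ⊗[ℂ] A →ₗ[ℂ] ℂ) (a a' : A) (v : M) :
    capLeft ε (a ⊗ₜ (a' ⊗ₜ v)) = ε (a ⊗ₜ a') • v := by
  simp [capLeft]

@[simp]
lemma capRight_tmul (ε : A ⊗[ℂ] A →ₗ[ℂ] ℂ) (v : M) (a a' : A) :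
    capRight ε ((v ⊗ₜ a) ⊗ₜ a') = ε (a ⊗ₜ a') • v := by
  simp [capRight]

lemma capLeft_lTensor_lTensor {N : Type*} [AddCommGroup N] [Module ℂ N]
    (ε : A ⊗[ℂ] A →ₗ[ℂ] ℂ) (f : M →ₗ[ℂ] N) :
    capLeft ε ∘ₗ lTensor A (lTensor A f) = f ∘ₗ capLeft ε :=
  TensorProduct.ext_threefold' fun a a' v => by simp

lemma rTensor_capRight_zigzag (ε : A ⊗[ℂ] A →ₗ[ℂ] ℂ) (η : A ⊗[ℂ] A)
    (hzig : ∀ a,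
      TensorProduct.lid ℂ A (rTensor A ε ((TensorProduct.assoc ℂ A A A).symm (a ⊗ₜ η))) = a)
    (v : M ⊗[ℂ] A) :
    rTensor A (capRight ε) ((TensorProduct.assoc ℂ (M ⊗[ℂ] A) A A).symm (v ⊗ₜ η)) = v := by
  induction v using TensorProduct.induction_on with
  | zero => simp
  | add v v' hv hv' => simp only [TensorProduct.add_tmul, map_add, hv, hv']
  | tmul m a =>
    have hmove : ∀ w : A ⊗[ℂ] A,
        rTensor A (capRight ε) ((TensorProduct.assoc ℂ (M ⊗[ℂ] A) A A).symm ((m ⊗ₜ a) ⊗ₜ w)) =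
          m ⊗ₜ TensorProduct.lid ℂ A
            (rTensor A ε ((TensorProduct.assoc ℂ A A A).symm (a ⊗ₜ w))) := by
      intro w
      induction w using TensorProduct.induction_on with
      | zero => simp
      | add w w' hw hw' => simp only [TensorProduct.tmul_add, map_add, hw, hw']
      | tmul b c => simp [TensorProduct.smul_tmul]
    rw [hmove, hzig]

end Caps

section QSystem

variable {B : Type*} [NormedAddCommGroup B] [InnerProductSpace ℂ B]
    {p : B ⊗[ℂ] B → B ⊗[ℂ] B → ℂ} {m : B ⊗[ℂ] B →ₗ[ℂ] B} {i : ℂ →ₗ[ℂ] B}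
    {mS : B →ₗ[ℂ] B ⊗[ℂ] B} {iS : B →ₗ[ℂ] ℂ}

lemma lid_rTensor_counit_comul (hp : IsTensorPairing p) (hmS : AdjointWRT p (innerP B) m mS)
    (hiS : AdjointWRT (innerP ℂ) (innerP B) i iS)
    (hunit : m ∘ₗ rTensor B i = (TensorProduct.lid ℂ B).toLinearMap) (b : B) :
    TensorProduct.lid ℂ B (rTensor B iS (mS b)) = b := by
  -- `(i* ⊗ 1) ∘ m*` is the adjoint of `m ∘ (i ⊗ 1) = 1`.
  obtain rfl := hp.eq_innerP
  have hiS_apply : ∀ u, iS u = inner ℂ (i 1) u := fun u => by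
    simpa [innerP, RCLike.inner_apply] using (hiS 1 u).symm
  have hpair : ∀ (c : B) (w : B ⊗[ℂ] B),
      inner ℂ c (TensorProduct.lid ℂ B (rTensor B iS w)) = inner ℂ (i 1 ⊗ₜ[ℂ] c) w := by
    intro c w
    induction w using TensorProduct.induction_on with
    | zero => simp
    | add w w' hw hw' => simp only [map_add, inner_add_right, hw, hw']
    | tmul u v => simp [hiS_apply]
  refine ext_inner_left ℂ fun c => ?_
  have hc : m (i 1 ⊗ₜ c) = c := by simpa using LinearMap.congr_fun hunit ((1 : ℂ) ⊗ₜ c)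
  calc inner ℂ c (TensorProduct.lid ℂ B (rTensor B iS (mS b)))
      _ = inner ℂ (i 1 ⊗ₜ c) (mS b) := hpair c _
      _ = inner ℂ (m (i 1 ⊗ₜ c)) b := (hmS _ b).symm
      _ = inner ℂ c b := by rw [hc]

lemma QSystemEqs.zigzag (hp : IsTensorPairing p) (hmS : AdjointWRT p (innerP B) m mS)
    (hiS : AdjointWRT (innerP ℂ) (innerP B) i iS) (hQ : QSystemEqs B m i mS) (b : B) :
    TensorProduct.lid ℂ B
      (rTensor B (iS ∘ₗ m) ((TensorProduct.assoc ℂ B B B).symm (b ⊗ₜ mS (i 1)))) = b := by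
  obtain ⟨-, hunitl, hunitr, hfrob, -, -⟩ := hQ
  have hb : m (b ⊗ₜ i 1) = b := by simpa using LinearMap.congr_fun hunitr (b ⊗ₜ (1 : ℂ))
  have hcomul : rTensor B m ((TensorProduct.assoc ℂ B B B).symm (b ⊗ₜ mS (i 1))) = mS b := by
    simpa [hb] using LinearMap.congr_fun hfrob (b ⊗ₜ i 1)
  rw [rTensor_comp, comp_apply, hcomul, lid_rTensor_counit_comul hp hmS hiS hunitl]

end QSystem

theorem stmt6_general
    (A B H : Type*)
    [NormedAddCommGroup A] [InnerProductSpace ℂ A]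
    [NormedAddCommGroup B] [InnerProductSpace ℂ B]
    [NormedAddCommGroup H] [InnerProductSpace ℂ H]
    (pBB : B ⊗[ℂ] B → B ⊗[ℂ] B → ℂ) (hpBB : IsTensorPairing pBB)
    (pAH : A ⊗[ℂ] H → A ⊗[ℂ] H → ℂ)
    (pHB : H ⊗[ℂ] B → H ⊗[ℂ] B → ℂ) (hpHB : IsTensorPairing pHB)
    (mA : A ⊗[ℂ] A →ₗ[ℂ] A)
    (mAS : A →ₗ[ℂ] A ⊗[ℂ] A) (iAS : A →ₗ[ℂ] ℂ)
    (mB : B ⊗[ℂ] B →ₗ[ℂ] B) (iB : ℂ →ₗ[ℂ] B)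
    (mBS : B →ₗ[ℂ] B ⊗[ℂ] B) (iBS : B →ₗ[ℂ] ℂ)
    (hmBS : AdjointWRT pBB (innerP B) mB mBS)
    (hiBS : AdjointWRT (innerP ℂ) (innerP B) iB iBS)
    (hQB : QSystemEqs B mB iB mBS)
    (Q1 : H →ₗ[ℂ] A ⊗[ℂ] H) (Q1S : A ⊗[ℂ] H →ₗ[ℂ] H)
    (hQ1S : AdjointWRT (innerP H) pAH Q1 Q1S)
    (Q2 : H →ₗ[ℂ] H ⊗[ℂ] B) (Q2S : H ⊗[ℂ] B →ₗ[ℂ] H)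
    (hQ2S : AdjointWRT (innerP H) pHB Q2 Q2S)
    (hQBE : QBEEqs A B H mA iAS mAS mB iBS mBS Q1 Q2 Q1S Q2S)
    (PS : A ⊗[ℂ] H →ₗ[ℂ] H ⊗[ℂ] B)
    (hPS : AdjointWRT pHB pAH (Q1 ∘ₗ Q2S) PS) :
    PS = (TensorProduct.lid ℂ (H ⊗[ℂ] B)).toLinearMap ∘ₗ
        rTensor (H ⊗[ℂ] B) (iAS ∘ₗ mA) ∘ₗ
        (TensorProduct.assoc ℂ A A (H ⊗[ℂ] B)).symm.toLinearMap ∘ₗ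
        lTensor A (TensorProduct.assoc ℂ A H B).toLinearMap ∘ₗ
        lTensor A (rTensor B (Q1 ∘ₗ Q2S)) ∘ₗ
        lTensor A (TensorProduct.assoc ℂ H B B).symm.toLinearMap ∘ₗ
        (TensorProduct.assoc ℂ A H (B ⊗[ℂ] B)).toLinearMap ∘ₗ
        lTensor (A ⊗[ℂ] H) (mBS ∘ₗ iB) ∘ₗ
        (TensorProduct.rid ℂ (A ⊗[ℂ] H)).symm.toLinearMap := by
  obtain ⟨-, -, hQ1Q2, -, -, hQ1S_eq, hQ2S_eq⟩ := hQBE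
  obtain rfl := hpHB.eq_innerP
  have hQ1S_cap : Q1S = capLeft (iAS ∘ₗ mA) ∘ₗ lTensor A Q1 := by
    rw [hQ1S_eq, capLeft, rTensor_comp]; rfl
  have hQ2S_cap : Q2S = capRight (iBS ∘ₗ mB) ∘ₗ rTensor B Q2 := by
    rw [hQ2S_eq, capRight, lTensor_comp]; rfl
  rw [hPS.unique (hQ2S.symm.comp hQ1S)]
  refine TensorProduct.ext' fun a k => ?_
  have hQ2S_zigzag :
      rTensor B Q2S ((TensorProduct.assoc ℂ H B B).symm (k ⊗ₜ mBS (iB 1))) = Q2 k := by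
    rw [hQ2S_cap, rTensor_comp, comp_apply, rTensor_rTensor_assoc_symm, rTensor_tmul,
      rTensor_capRight_zigzag _ _ (hQB.zigzag hpBB hmBS hiBS)]
  calc Q2 (Q1S (a ⊗ₜ k))
      _ = capLeft (iAS ∘ₗ mA) (a ⊗ₜ lTensor A Q2 (Q1 k)) := by
        rw [hQ1S_cap, ← comp_apply Q2, ← comp_assoc, ← capLeft_lTensor_lTensor]; rfl
      _ = capLeft (iAS ∘ₗ mA) (a ⊗ₜ TensorProduct.assoc ℂ A H B (rTensor B Q1 (Q2 k))) := by
        rw [← comp_apply (lTensor A Q2), hQ1Q2]; rfl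
      _ = _ := by
        rw [← hQ2S_zigzag, ← comp_apply (rTensor B Q1), ← rTensor_comp]; rfl

/-- For a quantum bi-element `(H, Q1, Q2)` of a pair of
Q-systems in Hilb, the map `P := Q1∘Q2* : H ⊗ B → A ⊗ H` satisfies the adjoint
axiom of a quantum function from `B` to `A`:
`P* = ((iA*∘mA) ⊗ 1_H ⊗ 1_B)∘(1_A ⊗ P ⊗ 1_B)∘(1_A ⊗ 1_H ⊗ (mB*∘iB))` as linear
maps `A ⊗ H → H ⊗ B` (identifying along the canonical associators and
unitors, here written explicitly; `PS` plays the role of the adjoint `P*`). -/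
theorem stmt6
    (A B H : Type*)
    [NormedAddCommGroup A] [InnerProductSpace ℂ A] [FiniteDimensional ℂ A]
    [NormedAddCommGroup B] [InnerProductSpace ℂ B] [FiniteDimensional ℂ B]
    [NormedAddCommGroup H] [InnerProductSpace ℂ H] [FiniteDimensional ℂ H]
    (pAA : A ⊗[ℂ] A → A ⊗[ℂ] A → ℂ) (hpAA : IsTensorPairing pAA)
    (pBB : B ⊗[ℂ] B → B ⊗[ℂ] B → ℂ) (hpBB : IsTensorPairing pBB)
    (pAH : A ⊗[ℂ] H → A ⊗[ℂ] H → ℂ) (hpAH : IsTensorPairing pAH)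
    (pHB : H ⊗[ℂ] B → H ⊗[ℂ] B → ℂ) (hpHB : IsTensorPairing pHB)
    (mA : A ⊗[ℂ] A →ₗ[ℂ] A) (iA : ℂ →ₗ[ℂ] A)
    (mAS : A →ₗ[ℂ] A ⊗[ℂ] A) (iAS : A →ₗ[ℂ] ℂ)
    (hmAS : AdjointWRT pAA (innerP A) mA mAS)
    (hiAS : AdjointWRT (innerP ℂ) (innerP A) iA iAS)
    (hQA : QSystemEqs A mA iA mAS)
    (mB : B ⊗[ℂ] B →ₗ[ℂ] B) (iB : ℂ →ₗ[ℂ] B)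
    (mBS : B →ₗ[ℂ] B ⊗[ℂ] B) (iBS : B →ₗ[ℂ] ℂ)
    (hmBS : AdjointWRT pBB (innerP B) mB mBS)
    (hiBS : AdjointWRT (innerP ℂ) (innerP B) iB iBS)
    (hQB : QSystemEqs B mB iB mBS)
    (Q1 : H →ₗ[ℂ] A ⊗[ℂ] H) (Q1S : A ⊗[ℂ] H →ₗ[ℂ] H)
    (hQ1S : AdjointWRT (innerP H) pAH Q1 Q1S)
    (Q2 : H →ₗ[ℂ] H ⊗[ℂ] B) (Q2S : H ⊗[ℂ] B →ₗ[ℂ] H)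
    (hQ2S : AdjointWRT (innerP H) pHB Q2 Q2S)
    (hQBE : QBEEqs A B H mA iAS mAS mB iBS mBS Q1 Q2 Q1S Q2S)
    (PS : A ⊗[ℂ] H →ₗ[ℂ] H ⊗[ℂ] B)
    (hPS : AdjointWRT pHB pAH (Q1 ∘ₗ Q2S) PS) :
    PS = (TensorProduct.lid ℂ (H ⊗[ℂ] B)).toLinearMap ∘ₗ
        rTensor (H ⊗[ℂ] B) (iAS ∘ₗ mA) ∘ₗ
        (TensorProduct.assoc ℂ A A (H ⊗[ℂ] B)).symm.toLinearMap ∘ₗ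
        lTensor A (TensorProduct.assoc ℂ A H B).toLinearMap ∘ₗ
        lTensor A (rTensor B (Q1 ∘ₗ Q2S)) ∘ₗ
        lTensor A (TensorProduct.assoc ℂ H B B).symm.toLinearMap ∘ₗ
        (TensorProduct.assoc ℂ A H (B ⊗[ℂ] B)).toLinearMap ∘ₗ
        lTensor (A ⊗[ℂ] H) (mBS ∘ₗ iB) ∘ₗ
        (TensorProduct.rid ℂ (A ⊗[ℂ] H)).symm.toLinearMap :=
  stmt6_general A B H pBB hpBB pAH pHB hpHB mA mAS iAS mB iB mBS iBS hmBS hiBS hQB Q1 Q1S hQ1S Q2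
    Q2S hQ2S hQBE PS hPS
end
end
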